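/- arXiv:1006.5803 — 3 statements merged into one kernel-verified Lean document; each statement's English description precedes it below -/
import Mathlib

section
/- Let H be a Hilbert space and x : Ω → H a family of vectors satisfying ⟨x_{(m,k,l;n,r,t)}, x_{(m',k',l';n',r',t')}⟩ = u_{m+m',k+l',l+k';n+n',r+t',t+r'} for a sequence u : Ω → ℂ. Then the linear operator A₀ on L = span{x_w} defined by A₀ x_{(m,k,l;n,r,t)} = x_{(m+1,k,l;n,r,t)} is well-defined (i.e., if two finite linear combinations of the x_w are equal as vectors in H, then the corresponding images agree) and is symmetric: ⟨A₀ y, z⟩ = ⟨y, A₀ z⟩ for all y, z ∈ L. -/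
/-- The index set `Ω = ℤ₊ × ℤ × ℤ × ℤ₊ × ℤ × ℤ` with elements `(m,k,l;n,r,t)`. -/
abbrev Om : Type := ℕ × ℤ × ℤ × ℕ × ℤ × ℤ

/-- The combination of indices appearing in the Gram identity. -/
def comb : Om → Om → Om
  | (m, k, l, n, r, t), (m', k', l', n', r', t') =>
    (m + m', k + l', l + k', n + n', r + t', t + r')

/-- The shift `(m,k,l;n,r,t) ↦ (m+1,k,l;n,r,t)` of the first index. -/
def incM : Om → Om
  | (m, k, l, n, r, t) => (m + 1, k, l, n, r, t)

/-!
The Gram identity makes `⟪x (incM w), x w'⟫` depend only on `comb w' (incM w) = comb (incM w') w`,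
so the shift `x_w ↦ x_{incM w}` is symmetric on the generators, and by sesquilinearity on the
span of finite linear combinations. Symmetry then gives well-definedness: if `∑ c_w x_w = 0`, then
`‖∑ c_w x_{incM w}‖² = ⟪∑ c_w x_w, ∑ c_w x_{incM (incM w)}⟫ = 0`, the second argument being again a
finite linear combination of the `x_w`.
-/

open Finsupp

section ShiftOnSpan

variable {𝕜 E ι : Type*} [RCLike 𝕜] [NormedAddCommGroup E] [InnerProductSpace 𝕜 E]
  {x : ι → E} {s : ι → ι}

theorem inner_linearCombination_comp_eq
    (h : ∀ i j, inner 𝕜 (x (s i)) (x j) = inner 𝕜 (x i) (x (s j))) (α β : ι →₀ 𝕜) :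
    inner 𝕜 (linearCombination 𝕜 (x ∘ s) α) (linearCombination 𝕜 x β) =
      inner 𝕜 (linearCombination 𝕜 x α) (linearCombination 𝕜 (x ∘ s) β) := by
  simp only [linearCombination_apply, Finsupp.sum, sum_inner, inner_sum, inner_smul_left,
    inner_smul_right, Function.comp_apply, h]

theorem linearCombination_comp_eq_zero
    (h : ∀ i j, inner 𝕜 (x (s i)) (x j) = inner 𝕜 (x i) (x (s j))) {α : ι →₀ 𝕜}
    (hα : linearCombination 𝕜 x α = 0) : linearCombination 𝕜 (x ∘ s) α = 0 := by
  refine (inner_self_eq_zero (𝕜 := 𝕜)).mp ?_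
  calc inner 𝕜 (linearCombination 𝕜 (x ∘ s) α) (linearCombination 𝕜 (x ∘ s) α)
      = inner 𝕜 (linearCombination 𝕜 (x ∘ s) α) (linearCombination 𝕜 x (mapDomain s α)) := by
        rw [linearCombination_mapDomain]
    _ = inner 𝕜 (linearCombination 𝕜 x α) (linearCombination 𝕜 (x ∘ s) (mapDomain s α)) :=
        inner_linearCombination_comp_eq h α _
    _ = 0 := by rw [hα, inner_zero_left]

theorem linearCombination_comp_eq_of_eq
    (h : ∀ i j, inner 𝕜 (x (s i)) (x j) = inner 𝕜 (x i) (x (s j))) {α β : ι →₀ 𝕜}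
    (hαβ : linearCombination 𝕜 x α = linearCombination 𝕜 x β) :
    linearCombination 𝕜 (x ∘ s) α = linearCombination 𝕜 (x ∘ s) β := by
  rw [← sub_eq_zero, ← map_sub] at hαβ ⊢
  exact linearCombination_comp_eq_zero h hαβ

end ShiftOnSpan

lemma comb_incM (w w' : Om) : comb w' (incM w) = comb (incM w') w := by
  obtain ⟨m, k, l, n, r, t⟩ := w
  obtain ⟨m', k', l', n', r', t'⟩ := w'
  simp only [comb, incM]
  ring_nf

/-- Given a family `x : Ω → H` whose Gram matrix is expressed by a sequence `u`,
the operator `A₀` defined on finite linear combinations of the `x_w` by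
`A₀ x_{(m,k,l;n,r,t)} = x_{(m+1,k,l;n,r,t)}` is well defined (equal linear combinations
have equal images) and symmetric: `(A₀ y, z) = (y, A₀ z)` on the span. -/
theorem shift_operator_well_defined_and_symmetric
    {H : Type} [NormedAddCommGroup H] [InnerProductSpace ℂ H]
    (u : Om → ℂ) (x : Om → H)
    (hGram : ∀ w w' : Om, (inner ℂ (x w') (x w) : ℂ) = u (comb w w')) :
    (∀ α β : Om →₀ ℂ,
        α.sum (fun w c => c • x w) = β.sum (fun w c => c • x w) →
        α.sum (fun w c => c • x (incM w)) = β.sum (fun w c => c • x (incM w))) ∧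
    (∀ α β : Om →₀ ℂ,
        (inner ℂ (α.sum fun w c => c • x (incM w)) (β.sum fun w c => c • x w) : ℂ) =
          inner ℂ (α.sum fun w c => c • x w) (β.sum fun w c => c • x (incM w))) := by
  have hshift : ∀ w w', inner ℂ (x (incM w)) (x w') = inner ℂ (x w) (x (incM w')) := by
    intro w w'
    rw [hGram w' (incM w), hGram (incM w') w, comb_incM]
  exact ⟨fun _ _ => linearCombination_comp_eq_of_eq hshift,
    inner_linearCombination_comp_eq hshift⟩
end

section
/- Let H be a Hilbert space, x : Ω → H a family of vectors, and A₀, B₀ symmetric operators on L = Lin{x_w} given by shifting the first and fourth indices respectively. Suppose the relations (A₀ + iI)x_{(m,k,l;n,r,t)} = x_{(m,k+1,l;n,r,t)}, (A₀ − iI)x_{(m,k,l;n,r,t)} = x_{(m,k,l+1;n,r,t)}, (B₀ + iI)x_{(m,k,l;n,r,t)} = x_{(m,k,l;n,r+1,t)}, (B₀ − iI)x_{(m,k,l;n,r,t)} = x_{(m,k,l;n,r,t+1)} hold for all w ∈ Ω. Then the Cayley transforms V_{A₀} = (A₀−iI)(A₀+iI)^{-1} and V_{B₀} = (B₀−iI)(B₀+iI)^{-1}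 satisfy V_{A₀}V_{B₀}x_w = x_{(m,k−1,l+1;n,r−1,t+1)} = V_{B₀}V_{A₀}x_w for all w = (m,k,l;n,r,t) ∈ Ω; in particular V_{A₀} and V_{B₀} commute on L. -/
theorem cayley_apply_shift {R M : Type*} [AddCommGroup M] [SMul R M]
    (A V : M → M) (c : R) (y : ℤ → ℤ → M)
    (hplus : ∀ k l, A (y k l) + c • y k l = y (k + 1) l)
    (hminus : ∀ k l, A (y k l) - c • y k l = y k (l + 1))
    (hV : ∀ k l, V (A (y k l) + c • y k l) = A (y k l) - c • y k l) (k l : ℤ) :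
    V (y k l) = y (k - 1) (l + 1) := by
  have hk : y k l = A (y (k - 1) l) + c • y (k - 1) l := by
    rw [hplus, sub_add_cancel]
  rw [hk, hV, hminus]

theorem cayley_transforms_commute_on_span_general
    {H : Type} [NormedAddCommGroup H] [InnerProductSpace ℂ H]
    (x : Om → H) (A0 B0 VA VB : H →ₗ[ℂ] H)
    (hAk : ∀ m k l n r t, A0 (x (m, k, l, n, r, t)) + Complex.I • x (m, k, l, n, r, t)
        = x (m, k + 1, l, n, r, t))
    (hAl : ∀ m k l n r t, A0 (x (m, k, l, n, r, t)) - Complex.I • x (m, k, l, n, r, t)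
        = x (m, k, l + 1, n, r, t))
    (hBr : ∀ m k l n r t, B0 (x (m, k, l, n, r, t)) + Complex.I • x (m, k, l, n, r, t)
        = x (m, k, l, n, r + 1, t))
    (hBt : ∀ m k l n r t, B0 (x (m, k, l, n, r, t)) - Complex.I • x (m, k, l, n, r, t)
        = x (m, k, l, n, r, t + 1))
    (hVA : ∀ m k l n r t, VA (A0 (x (m, k, l, n, r, t)) + Complex.I • x (m, k, l, n, r, t))
        = A0 (x (m, k, l, n, r, t)) - Complex.I • x (m, k, l, n, r, t))
    (hVB : ∀ m k l n r t, VB (B0 (x (m, k, l, n, r, t)) + Complex.I • x (m, k, l, n, r, t))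
        = B0 (x (m, k, l, n, r, t)) - Complex.I • x (m, k, l, n, r, t)) :
    ∀ m k l n r t,
      VA (VB (x (m, k, l, n, r, t))) = x (m, k - 1, l + 1, n, r - 1, t + 1) ∧
      VB (VA (x (m, k, l, n, r, t))) = x (m, k - 1, l + 1, n, r - 1, t + 1) ∧
      VA (VB (x (m, k, l, n, r, t))) = VB (VA (x (m, k, l, n, r, t))) := by
  have hVAx : ∀ m k l n r t, VA (x (m, k, l, n, r, t)) = x (m, k - 1, l + 1, n, r, t) :=
    fun m k l n r t => cayley_apply_shift A0 VA Complex.I (fun k l => x (m, k, l, n, r, t))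
      (hAk m · · n r t) (hAl m · · n r t) (hVA m · · n r t) k l
  have hVBx : ∀ m k l n r t, VB (x (m, k, l, n, r, t)) = x (m, k, l, n, r - 1, t + 1) :=
    fun m k l n r t => cayley_apply_shift B0 VB Complex.I (fun r t => x (m, k, l, n, r, t))
      (hBr m k l n · ·) (hBt m k l n · ·) (hVB m k l n · ·) r t
  intro m k l n r t
  simp only [hVAx, hVBx, and_self]

/-- The family `{x_w}` together with operators `A₀, B₀` (the index shifts
`m ↦ m+1` and `n ↦ n+1` on the span), assumed to satisfy
`(A₀ ± i)x_{(m,k,l;n,r,t)} = x_{(m,k+1,l;n,r,t)}`, resp. `x_{(m,k,l+1;n,r,t)}`, and the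
analogous relations for `B₀` in the fifth and sixth indices.  If `V_A`, `V_B` act as the
Cayley transforms of `A₀`, `B₀` (i.e. `V(A₀x + ix) = A₀x - ix` on the span), then
`V_A V_B x_w = x_{(m,k-1,l+1;n,r-1,t+1)} = V_B V_A x_w` for every `w = (m,k,l;n,r,t)`;
in particular `V_A` and `V_B` commute on the span of the `x_w`. -/
theorem cayley_transforms_commute_on_span
    {H : Type} [NormedAddCommGroup H] [InnerProductSpace ℂ H]
    (x : Om → H) (A0 B0 VA VB : H →ₗ[ℂ] H)
    (hA0 : ∀ m k l n r t, A0 (x (m, k, l, n, r, t)) = x (m + 1, k, l, n, r, t))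
    (hB0 : ∀ m k l n r t, B0 (x (m, k, l, n, r, t)) = x (m, k, l, n + 1, r, t))
    (hAk : ∀ m k l n r t, A0 (x (m, k, l, n, r, t)) + Complex.I • x (m, k, l, n, r, t)
        = x (m, k + 1, l, n, r, t))
    (hAl : ∀ m k l n r t, A0 (x (m, k, l, n, r, t)) - Complex.I • x (m, k, l, n, r, t)
        = x (m, k, l + 1, n, r, t))
    (hBr : ∀ m k l n r t, B0 (x (m, k, l, n, r, t)) + Complex.I • x (m, k, l, n, r, t)
        = x (m, k, l, n, r + 1, t))
    (hBt : ∀ m k l n r t, B0 (x (m, k, l, n, r, t)) - Complex.I • x (m, k, l, n, r, t)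
        = x (m, k, l, n, r, t + 1))
    (hVA : ∀ m k l n r t, VA (A0 (x (m, k, l, n, r, t)) + Complex.I • x (m, k, l, n, r, t))
        = A0 (x (m, k, l, n, r, t)) - Complex.I • x (m, k, l, n, r, t))
    (hVB : ∀ m k l n r t, VB (B0 (x (m, k, l, n, r, t)) + Complex.I • x (m, k, l, n, r, t))
        = B0 (x (m, k, l, n, r, t)) - Complex.I • x (m, k, l, n, r, t)) :
    ∀ m k l n r t,
      VA (VB (x (m, k, l, n, r, t))) = x (m, k - 1, l + 1, n, r - 1, t + 1) ∧
      VB (VA (x (m, k, l, n, r, t))) = x (m, k - 1, l + 1, n, r - 1, t + 1) ∧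
      VA (VB (x (m, k, l, n, r, t))) = VB (VA (x (m, k, l, n, r, t))) :=
  cayley_transforms_commute_on_span_general x A0 B0 VA VB hAk hAl hBr hBt hVA hVB
end

section
/- If the extended two-dimensional moment problem has a solution, i.e., there exists a non-negative Borel measure μ on ℝ² with ∫ x₁^m (x₁+i)^k (x₁−i)^l x₂^n (x₂+i)^r (x₂−i)^t dμ = u_{m,k,l;n,r,t} for all (m,k,l;n,r,t) ∈ Ω, then the solution is unique: any two such measures coincide. -/
open MeasureTheory

/-- The integrand `x₁^m (x₁+i)^k (x₁-i)^l x₂^n (x₂+i)^r (x₂-i)^t` of the extended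
two-dimensional moment problem (negative exponents are `zpow`s; `x ± i ≠ 0` for real `x`). -/
noncomputable def yfun : Om → ℝ × ℝ → ℂ
  | (m, k, l, n, r, t), p =>
      (p.1 : ℂ) ^ m * ((p.1 : ℂ) + Complex.I) ^ k * ((p.1 : ℂ) - Complex.I) ^ l *
      (p.2 : ℂ) ^ n * ((p.2 : ℂ) + Complex.I) ^ r * ((p.2 : ℂ) - Complex.I) ^ t

/-- `μ` solves the extended two-dimensional moment problem with data `u`. -/
def ExtSolution (u : Om → ℂ) (μ : Measure (ℝ × ℝ)) : Prop :=
  ∀ w : Om, Integrable (yfun w) μ ∧ ∫ p : ℝ × ℝ, yfun w p ∂μ = u w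

open Complex BoundedContinuousFunction

/-!
The Cayley transform `x ↦ (x - i) / (x + i)` maps `ℝ` injectively into the unit circle, and it
and its conjugate `(x + i) / (x - i)` are among the integrands `yfun w`. So the bounded integrands
form a star-closed multiplicative monoid of bounded continuous functions on `ℝ²` that separates
points. Its span is then a point-separating star-subalgebra, and by a Stone–Weierstrass argument
(`ext_of_forall_mem_subalgebra_integral_eq_of_pseudoEMetric_complete_countable`) two finite
measures with the same integrals on it coincide. Finiteness is the moment `w = 0`: `yfun 0 = 1`.
-/

section SubmonoidExt

variable {E 𝕜 : Type*} [RCLike 𝕜] [MeasurableSpace E] [PseudoEMetricSpace E] [BorelSpace E]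
  [CompleteSpace E] [SecondCountableTopology E]

theorem ext_of_forall_mem_submonoid_integral_eq {P P' : Measure E} [IsFiniteMeasure P]
    [IsFiniteMeasure P'] {S : Submonoid (E →ᵇ 𝕜)} (hstar : ∀ g ∈ S, star g ∈ S)
    (hsep : ∀ ⦃x y : E⦄, x ≠ y → ∃ g ∈ S, g x ≠ g y)
    (heq : ∀ g ∈ S, ∫ x, g x ∂P = ∫ x, g x ∂P') : P = P' := by
  set A := StarAlgebra.adjoin 𝕜 (S : Set (E →ᵇ 𝕜))
  have hA : Subalgebra.toSubmodule A.toSubalgebra = Submodule.span 𝕜 (S : Set (E →ᵇ 𝕜)) := by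
    rw [StarAlgebra.adjoin_toSubalgebra,
      Set.union_eq_left.mpr fun g hg => by simpa using hstar _ hg, Algebra.adjoin_eq_span,
      Submonoid.closure_eq]
  have hspan : ∀ g ∈ Submodule.span 𝕜 (S : Set (E →ᵇ 𝕜)), ∫ x, g x ∂P = ∫ x, g x ∂P' := by
    intro g hg
    induction hg using Submodule.span_induction with
    | mem g hg => exact heq g hg
    | zero => simp
    | add f g _ _ hf hg =>
      simp only [coe_add, Pi.add_apply]
      rw [integral_add (f.integrable (μ := P)) (g.integrable (μ := P)),
        integral_add (f.integrable (μ := P')) (g.integrable (μ := P')), hf, hg]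
    | smul c f _ hf => simp only [BoundedContinuousFunction.coe_smul, integral_smul, hf]
  refine ext_of_forall_mem_subalgebra_integral_eq_of_pseudoEMetric_complete_countable
    (A := A) ?_ fun g hg => hspan g (hA ▸ hg)
  intro x y hxy
  obtain ⟨g, hg, hne⟩ := hsep hxy
  exact ⟨_, ⟨_, ⟨g, StarAlgebra.subset_adjoin 𝕜 _ hg, rfl⟩, rfl⟩, hne⟩

end SubmonoidExt

namespace Complex

lemma ofReal_add_I_ne_zero (x : ℝ) : (x : ℂ) + I ≠ 0 := fun h => by simpa using congrArg im h

lemma ofReal_sub_I_ne_zero (x : ℝ) : (x : ℂ) - I ≠ 0 := fun h => by simpa using congrArg im h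

end Complex

noncomputable def cayleyTransform (x : ℝ) : ℂ := (x - I) / (x + I)

lemma norm_cayleyTransform (x : ℝ) : ‖cayleyTransform x‖ = 1 := by
  rw [cayleyTransform, norm_div, div_eq_one_iff_eq (norm_ne_zero_iff.mpr (ofReal_add_I_ne_zero x))]
  simp [norm_def, normSq_apply]

lemma continuous_cayleyTransform : Continuous cayleyTransform :=
  (continuous_ofReal.sub continuous_const).div (continuous_ofReal.add continuous_const)
    ofReal_add_I_ne_zero

lemma cayleyTransform_injective : Function.Injective cayleyTransform := by
  intro x y h
  rw [cayleyTransform, cayleyTransform,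
    div_eq_div_iff (ofReal_add_I_ne_zero x) (ofReal_add_I_ne_zero y)] at h
  have hxy : (2 * I) * (x : ℂ) = (2 * I) * y := by linear_combination h
  exact_mod_cast mul_left_cancel₀ (by simp) hxy

noncomputable def cayleyTransformBCF : ℝ →ᵇ ℂ :=
  .ofNormedAddCommGroup cayleyTransform continuous_cayleyTransform 1
    fun x => (norm_cayleyTransform x).le

lemma yfun_zero : yfun 0 = 1 := by
  funext p; simp [yfun]

lemma yfun_add (v w : Om) : yfun (v + w) = yfun v * yfun w := by
  obtain ⟨m, k, l, n, r, t⟩ := v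
  obtain ⟨m', k', l', n', r', t'⟩ := w
  funext p
  simp only [yfun, Pi.mul_apply, pow_add,
    zpow_add₀ (ofReal_add_I_ne_zero _), zpow_add₀ (ofReal_sub_I_ne_zero _)]
  ring

lemma star_yfun (m : ℕ) (k l : ℤ) (n : ℕ) (r t : ℤ) :
    star (yfun (m, k, l, n, r, t)) = yfun (m, l, k, n, t, r) := by
  funext p
  simp only [yfun, Pi.star_apply, star_mul', star_pow, star_zpow₀, star_add, star_sub,
    Complex.star_def, conj_ofReal, conj_I, sub_neg_eq_add, ← sub_eq_add_neg]
  ring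

lemma cayleyTransform_fst (p : ℝ × ℝ) : cayleyTransform p.1 = yfun (0, -1, 1, 0, 0, 0) p := by
  simp [yfun, cayleyTransform, div_eq_mul_inv, mul_comm]

lemma cayleyTransform_snd (p : ℝ × ℝ) : cayleyTransform p.2 = yfun (0, 0, 0, 0, -1, 1) p := by
  simp [yfun, cayleyTransform, div_eq_mul_inv, mul_comm]

def boundedYfun : Submonoid (ℝ × ℝ →ᵇ ℂ) where
  carrier := {g | ∃ w, ⇑g = yfun w}
  one_mem' := ⟨0, yfun_zero.symm⟩
  mul_mem' := by
    rintro f g ⟨v, hf⟩ ⟨w, hg⟩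
    exact ⟨v + w, by rw [BoundedContinuousFunction.coe_mul, hf, hg, yfun_add]⟩

lemma star_mem_boundedYfun : ∀ g ∈ boundedYfun, star g ∈ boundedYfun := by
  rintro g ⟨⟨m, k, l, n, r, t⟩, hg⟩
  exact ⟨(m, l, k, n, t, r), by rw [BoundedContinuousFunction.coe_star, hg, star_yfun]⟩

lemma boundedYfun_separatesPoints ⦃p q : ℝ × ℝ⦄ (hpq : p ≠ q) :
    ∃ g ∈ boundedYfun, g p ≠ g q := by
  by_cases h₁ : p.1 = q.1
  · have h₂ : p.2 ≠ q.2 := fun h₂ => hpq (Prod.ext h₁ h₂)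
    refine ⟨cayleyTransformBCF.compContinuous .snd, ⟨_, funext cayleyTransform_snd⟩, ?_⟩
    exact fun h => h₂ (cayleyTransform_injective h)
  · refine ⟨cayleyTransformBCF.compContinuous .fst, ⟨_, funext cayleyTransform_fst⟩, ?_⟩
    exact fun h => h₁ (cayleyTransform_injective h)

lemma ExtSolution.isFiniteMeasure {u : Om → ℂ} {μ : Measure (ℝ × ℝ)} (h : ExtSolution u μ) :
    IsFiniteMeasure μ :=
  (integrable_const_iff_isFiniteMeasure one_ne_zero).mp (yfun_zero ▸ (h 0).1)

/-- The extended two-dimensional moment problem is determinate: any two non-negative Borel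
measures on `ℝ²` with the same extended moments `u` coincide. -/
theorem extended_moment_problem_unique (u : Om → ℂ) (μ₁ μ₂ : Measure (ℝ × ℝ))
    (h₁ : ExtSolution u μ₁) (h₂ : ExtSolution u μ₂) : μ₁ = μ₂ := by
  have := h₁.isFiniteMeasure
  have := h₂.isFiniteMeasure
  refine ext_of_forall_mem_submonoid_integral_eq star_mem_boundedYfun
    boundedYfun_separatesPoints ?_
  rintro g ⟨w, hg⟩
  rw [hg, (h₁ w).2, (h₂ w).2]
end
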